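/- arXiv:0807.1228 — 2 statements merged into one kernel-verified Lean document; each statement's English description precedes it below -/
import Mathlib

section
/- Let (M, d) be a metric space, let R > 0 and Δ > 0, and let (x_j, y_j)_{j ∈ J} be a finite family of transmitter–receiver pairs in M such that d(x_j, y_j) ≤ R for every j ∈ J, and d(x_k, y_j) ≥ (1 + Δ) * R for every pair of distinct indices k ≠ j in J. Then for every pair of distinct indices j ≠ k in J, the receivers satisfy d(y_j, y_k) ≥ Δ * R. -/
theorem stmt9_general {M : Type*} [MetricSpace M] (R Δ : ℝ)
    {J : Type*} (x y : J → M)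
    (h1 : ∀ j : J, dist (x j) (y j) ≤ R)
    (h2 : ∀ k j : J, k ≠ j → (1 + Δ) * R ≤ dist (x k) (y j)) :
    ∀ j k : J, j ≠ k → Δ * R ≤ dist (y j) (y k) := by
  intro j k hjk
  have via_own_receiver : dist (x k) (y j) ≤ dist (x k) (y k) + dist (y j) (y k) :=
    dist_triangle_right _ _ _
  linarith [h1 k, h2 k j hjk.symm]

/-- Protocol model receiver separation: in a metric space, if `(x j, y j)_{j ∈ J}` is a
finite family of transmitter–receiver pairs with `dist (x j) (y j) ≤ R` for every `j`, and
`dist (x k) (y j) ≥ (1 + Δ) * R` for all distinct `k ≠ j`, then any two distinct receivers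
satisfy `dist (y j) (y k) ≥ Δ * R`. -/
theorem stmt9 {M : Type*} [MetricSpace M] (R Δ : ℝ) (hR : 0 < R) (hΔ : 0 < Δ)
    {J : Type*} [Fintype J] (x y : J → M)
    (h1 : ∀ j : J, dist (x j) (y j) ≤ R)
    (h2 : ∀ k j : J, k ≠ j → (1 + Δ) * R ≤ dist (x k) (y j)) :
    ∀ j k : J, j ≠ k → Δ * R ≤ dist (y j) (y k) :=
  stmt9_general R Δ x y h1 h2
end

section
/- Let n > 0, R > 0 and Δ > 0, and let (x_j, y_j)_{j ∈ J} be a finite family of transmitter–receiver pairs of points in the square [0, √n]² ⊂ ℝ² such that ‖x_j − y_j‖ ≤ R for every j ∈ J and ‖x_k − y_j‖ ≥ (1 + Δ) * R for all distinct k ≠ j in J. Then the number of pairs satisfies |J| ≤ 4 * (√n + Δ*R)² / (π * Δ² * R²). In particular, if Δ*R ≤ √n then |J| ≤ 16 * n / (π * Δ² * R²). -/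
/-!
Under the protocol model the receivers are pairwise at distance at least `Δ * R`: if `y k` and
`y j` were closer, the transmitter `x k`, within `R` of `y k`, would come within `(1 + Δ) * R`
of `y j`. Hence the open balls of radius `Δ * R / 2` around the receivers are pairwise disjoint,
and they all lie in the square `[0, √n]²` thickened by `Δ * R / 2`, whose area is
`(√n + Δ * R)²`. Comparing areas gives `|J| * π (Δ * R / 2)² ≤ (√n + Δ * R)²`.
-/

open scoped Real ENNReal
open MeasureTheory Metric Set

theorem dist_receivers_ge_of_protocol {X J : Type*} [PseudoMetricSpace X] {R Δ : ℝ}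
    {x y : J → X} (h1 : ∀ j, dist (x j) (y j) ≤ R)
    (h2 : ∀ k j, k ≠ j → (1 + Δ) * R ≤ dist (x k) (y j)) {k j : J} (hkj : k ≠ j) :
    Δ * R ≤ dist (y k) (y j) := by
  linarith [h1 k, h2 k j hkj, dist_triangle (x k) (y k) (y j)]

theorem sum_measure_ball_le_of_separated {X J : Type*} [PseudoMetricSpace X] [MeasurableSpace X]
    [OpensMeasurableSpace X] [Fintype J] (μ : Measure X) {c : J → X} {r : ℝ}
    (hsep : Pairwise fun k j => 2 * r ≤ dist (c k) (c j)) {S : Set X}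
    (hS : ∀ j, ball (c j) r ⊆ S) :
    ∑ j, μ (ball (c j) r) ≤ μ S := by
  have hdisj : PairwiseDisjoint (Finset.univ : Finset J) fun j => ball (c j) r :=
    fun k _ j _ hkj => ball_disjoint_ball (by linarith [hsep hkj])
  calc ∑ j, μ (ball (c j) r)
      = μ (⋃ j ∈ (Finset.univ : Finset J), ball (c j) r) :=
        (measure_biUnion_finset hdisj fun j _ => measurableSet_ball).symm
    _ ≤ μ S := measure_mono (iUnion₂_subset fun j _ => hS j)

namespace EuclideanSpace

variable {ι : Type*} [Fintype ι]

theorem volume_setOf_forall_mem_Icc (a b : ℝ) :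
    volume {z : EuclideanSpace ℝ ι | ∀ i, z i ∈ Icc a b}
      = ENNReal.ofReal (b - a) ^ Fintype.card ι := by
  have hbox : {z : EuclideanSpace ℝ ι | ∀ i, z i ∈ Icc a b}
      = WithLp.ofLp ⁻¹' Icc (fun _ => a) (fun _ => b) := by
    ext z
    simp only [mem_ofPred_eq, mem_preimage, mem_Icc, Pi.le_def, forall_and]
  rw [hbox, (PiLp.volume_preserving_ofLp ι).measure_preimage measurableSet_Icc.nullMeasurableSet,
    Real.volume_Icc_pi, Finset.prod_const, Finset.card_univ]

theorem ball_subset_setOf_forall_mem_Icc {a b r : ℝ} {c : EuclideanSpace ℝ ι}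
    (hc : ∀ i, c i ∈ Icc a b) :
    ball c r ⊆ {z | ∀ i, z i ∈ Icc (a - r) (b + r)} := by
  intro z hz i
  have hzi : |z i - c i| ≤ r := by
    rw [← Real.dist_eq]
    exact (PiLp.dist_apply_le z c i).trans (mem_ball.mp hz).le
  obtain ⟨hlo, hhi⟩ := abs_le.mp hzi
  exact ⟨by linarith [(hc i).1], by linarith [(hc i).2]⟩

end EuclideanSpace

theorem card_mul_pi_sq_le_of_separated_in_square {J : Type*} [Fintype J] {s r : ℝ}
    (hr : 0 ≤ r) (c : J → EuclideanSpace ℝ (Fin 2)) (hc : ∀ j i, c j i ∈ Icc 0 s)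
    (hsep : Pairwise fun k j => 2 * r ≤ dist (c k) (c j)) :
    (Fintype.card J : ℝ) * (π * r ^ 2) ≤ (s + 2 * r) ^ 2 := by
  rcases isEmpty_or_nonempty J with hJ | ⟨⟨j₀⟩⟩
  · simp only [Fintype.card_eq_zero, Nat.cast_zero, zero_mul]
    positivity
  have hs : 0 ≤ s := (hc j₀ 0).1.trans (hc j₀ 0).2
  have hvol := sum_measure_ball_le_of_separated volume hsep
    fun j => EuclideanSpace.ball_subset_setOf_forall_mem_Icc (hc j)
  rw [EuclideanSpace.volume_setOf_forall_mem_Icc, Fintype.card_fin] at hvol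
  simp only [EuclideanSpace.volume_ball_fin_two, Finset.sum_const, Finset.card_univ,
    nsmul_eq_mul] at hvol
  rw [← ENNReal.ofReal_pow hr, ← ENNReal.ofReal_mul (by positivity), ← ENNReal.ofReal_natCast,
    ← ENNReal.ofReal_mul (by positivity), ← ENNReal.ofReal_pow (by linarith),
    ENNReal.ofReal_le_ofReal_iff (by positivity)] at hvol
  linarith

theorem stmt11_general (n R Δ : ℝ) (hn : 0 < n) (hR : 0 < R) (hΔ : 0 < Δ)
    {J : Type*} [Fintype J] (x y : J → EuclideanSpace ℝ (Fin 2))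
    (hy : ∀ j : J, ∀ i : Fin 2, y j i ∈ Set.Icc (0 : ℝ) (Real.sqrt n))
    (h1 : ∀ j : J, dist (x j) (y j) ≤ R)
    (h2 : ∀ k j : J, k ≠ j → (1 + Δ) * R ≤ dist (x k) (y j)) :
    (Fintype.card J : ℝ) ≤ 4 * (Real.sqrt n + Δ * R) ^ 2 / (π * Δ ^ 2 * R ^ 2) ∧
    (Δ * R ≤ Real.sqrt n →
      (Fintype.card J : ℝ) ≤ 16 * n / (π * Δ ^ 2 * R ^ 2)) := by
  have hpacking := card_mul_pi_sq_le_of_separated_in_square (r := Δ * R / 2) (by positivity) y hy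
    fun k j hkj => by linarith [dist_receivers_ge_of_protocol h1 h2 hkj]
  have hbound : (Fintype.card J : ℝ) * (π * Δ ^ 2 * R ^ 2) ≤ 4 * (Real.sqrt n + Δ * R) ^ 2 := by
    linarith
  have hden : 0 < π * Δ ^ 2 * R ^ 2 := by positivity
  refine ⟨(le_div_iff₀ hden).mpr hbound, fun hsmall => (le_div_iff₀ hden).mpr ?_⟩
  calc (Fintype.card J : ℝ) * (π * Δ ^ 2 * R ^ 2)
      ≤ 4 * (Real.sqrt n + Δ * R) ^ 2 := hbound
    _ ≤ 4 * (2 * Real.sqrt n) ^ 2 := by gcongr; linarith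
    _ = 16 * n := by rw [mul_pow, Real.sq_sqrt hn.le]; ring

/-- Throughput bound under the protocol model: if `(x j, y j)_{j ∈ J}` is a finite family of
transmitter–receiver pairs of points of the square `[0, √n]² ⊂ ℝ²` (Euclidean metric) with
`dist (x j) (y j) ≤ R` for every `j` and `dist (x k) (y j) ≥ (1 + Δ) * R` for all distinct
`k ≠ j`, then `|J| ≤ 4 * (√n + Δ*R)² / (π * Δ² * R²)`; in particular, if `Δ*R ≤ √n` then
`|J| ≤ 16 * n / (π * Δ² * R²)`. -/
theorem stmt11 (n R Δ : ℝ) (hn : 0 < n) (hR : 0 < R) (hΔ : 0 < Δ)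
    {J : Type*} [Fintype J] (x y : J → EuclideanSpace ℝ (Fin 2))
    (hx : ∀ j : J, ∀ i : Fin 2, x j i ∈ Set.Icc (0 : ℝ) (Real.sqrt n))
    (hy : ∀ j : J, ∀ i : Fin 2, y j i ∈ Set.Icc (0 : ℝ) (Real.sqrt n))
    (h1 : ∀ j : J, dist (x j) (y j) ≤ R)
    (h2 : ∀ k j : J, k ≠ j → (1 + Δ) * R ≤ dist (x k) (y j)) :
    (Fintype.card J : ℝ) ≤ 4 * (Real.sqrt n + Δ * R) ^ 2 / (π * Δ ^ 2 * R ^ 2) ∧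
    (Δ * R ≤ Real.sqrt n →
      (Fintype.card J : ℝ) ≤ 16 * n / (π * Δ ^ 2 * R ^ 2)) :=
  stmt11_general n R Δ hn hR hΔ x y hy h1 h2
end
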